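/- For every LTL-SN model M = (𝒜, N, θ, I), every agent a ∈ 𝒜, and every position i: M, i ⊨ X β_a if and only if M, i ⊨ β_a ∨ β_{N(a)>θ} (the reduction axiom Red.Ax.X.β is valid: an agent has the behavior at the next position iff it already has it or the proportion of its neighbors having it exceeds θ). -/

import Mathlib

open scoped Classical

/-- An LTL-SN model: a finite set of agents `A`, an irreflexive, serial and
symmetric neighborhood function `N`, a threshold `θ ∈ [0,1]` and an initial
behavior set `I`. -/
structure SNModel (A : Type*) [Fintype A] [DecidableEq A] where
  N : A → Finset A
  θ : ℝ
  I : Finset A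
  irrefl : ∀ a, a ∉ N a
  serial : ∀ a, (N a).Nonempty
  symm : ∀ a c, c ∈ N a ↔ a ∈ N c
  θ_nonneg : 0 ≤ θ
  θ_le_one : θ ≤ 1

variable {A : Type*} [Fintype A] [DecidableEq A]

/-- The update `B ∪ {a ∈ 𝒜 : |N(a) ∩ B| / |N(a)| > θ}`. -/
noncomputable def SNModel.upd (M : SNModel A) (B : Finset A) : Finset A :=
  B ∪ Finset.univ.filter (fun a => M.θ < ((M.N a ∩ B).card : ℝ) / ((M.N a).card : ℝ))

/-- The relation `B ≤ B'` of the model. -/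
def SNModel.rel (M : SNModel A) (B B' : Finset A) : Prop := B' = M.upd B

/-- The (unique) path of the model: `b 0 = I` and `b i ≤ b (i+1)`. -/
noncomputable def SNModel.path (M : SNModel A) : ℕ → Finset A
  | 0 => M.I
  | i + 1 => M.upd (M.path i)

/-- Formulas of LTL-SN: `⊤ | N_{ab} | β_a | ¬φ | φ∧φ | Xφ | φUφ`. -/
inductive Formula (A : Type*) : Type _
  | top : Formula A
  | nbr : A → A → Formula A
  | beta : A → Formula A
  | neg : Formula A → Formula A
  | and : Formula A → Formula A → Formula A
  | next : Formula A → Formula A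
  | untl : Formula A → Formula A → Formula A
deriving DecidableEq

/-- Disjunction abbreviation `φ ∨ ψ := ¬(¬φ ∧ ¬ψ)`. -/
def Formula.orF (φ ψ : Formula A) : Formula A := .neg (.and (.neg φ) (.neg ψ))

/-- Implication abbreviation `φ → ψ := ¬(φ ∧ ¬ψ)`. -/
def Formula.impF (φ ψ : Formula A) : Formula A := .neg (.and φ (.neg ψ))

/-- Biimplication abbreviation. -/
def Formula.iffF (φ ψ : Formula A) : Formula A := .and (φ.impF ψ) (ψ.impF φ)

/-- `F φ := ⊤ U φ`. -/
def Formula.ev (φ : Formula A) : Formula A := .untl .top φ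

/-- `G φ := ¬ F ¬ φ`. -/
def Formula.glob (φ : Formula A) : Formula A := .neg (Formula.ev (.neg φ))

/-- Finite disjunction of a list of formulas. -/
def bigOr : List (Formula A) → Formula A
  | [] => .neg .top
  | φ :: l => φ.orF (bigOr l)

/-- Finite conjunction of a list of formulas. -/
def bigAnd : List (Formula A) → Formula A
  | [] => .top
  | φ :: l => .and φ (bigAnd l)

/-- Satisfaction at a position of the unique path of the model. -/
def Sat (M : SNModel A) : ℕ → Formula A → Prop
  | _, Formula.top => True
  | _, Formula.nbr a c => c ∈ M.N a
  | i, Formula.beta a => a ∈ M.path i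
  | i, Formula.neg φ => ¬ Sat M i φ
  | i, Formula.and φ ψ => Sat M i φ ∧ Sat M i ψ
  | i, Formula.next φ => Sat M (i + 1) φ
  | i, Formula.untl φ ψ => ∃ n : ℕ, Sat M (i + n) ψ ∧ ∀ j < n, Sat M (i + j) φ

/-- The until-expansion steps: `u⁰(φUψ) = ψ`, `uⁿ⁺¹(φUψ) = φ ∧ X uⁿ(φUψ)`. -/
def uStep (φ ψ : Formula A) : ℕ → Formula A
  | 0 => ψ
  | n + 1 => .and φ (.next (uStep φ ψ n))

/-- The until expansion `EXP_U(φUψ) = ⋁_{0 ≤ n ≤ |𝒜|} uⁿ(φUψ)`. -/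
def expU (φ ψ : Formula A) : Formula A :=
  bigOr (((List.range (Fintype.card A + 1))).map (uStep φ ψ))

/-- The majority abbreviation
`β_{N(a)>θ} := ⋁_{G ⊆ 𝒩 ⊆ 𝒜, |G|/|𝒩| > θ} (⋀_{c∈𝒩} N_{ac} ∧ ⋀_{c∉𝒩} ¬N_{ac} ∧ ⋀_{c∈G} β_c)`. -/
noncomputable def majorityF (θ : ℝ) (a : A) : Formula A :=
  bigOr ((((Finset.univ : Finset (Finset A × Finset A)).filter
      (fun p => p.1 ⊆ p.2 ∧ θ < (p.1.card : ℝ) / (p.2.card : ℝ))).toList).map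
    (fun p =>
      Formula.and (bigAnd (p.2.toList.map (fun c => Formula.nbr a c)))
        (Formula.and
          (bigAnd (((Finset.univ : Finset A) \ p.2).toList.map
            (fun c => Formula.neg (Formula.nbr a c))))
          (bigAnd (p.1.toList.map (fun c => Formula.beta c))))))

/-- Propositional evaluation: `⊤`, `¬`, `∧` are interpreted, all other formulas
are treated as atoms evaluated by the valuation `v`. -/
def evalProp (v : Formula A → Prop) : Formula A → Prop
  | .top => True
  | .neg φ => ¬ evalProp v φ
  | .and φ ψ => evalProp v φ ∧ evalProp v ψ
  | φ => v φ

/-- A (substitution instance of a) classical propositional tautology. -/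
def Tautology (φ : Formula A) : Prop := ∀ v : Formula A → Prop, evalProp v φ

/-- The LTL-SN proof system. -/
inductive Proof (θ : ℝ) : Formula A → Prop
  | taut {φ : Formula A} : Tautology φ → Proof θ φ
  | netIrrefl (a : A) : Proof θ (.neg (.nbr a a))
  | netSymm (a c : A) : Proof θ ((Formula.nbr a c).iffF (.nbr c a))
  | netSerial (a : A) :
      Proof θ (bigOr (((Finset.univ : Finset A)).toList.map (fun c => Formula.nbr a c)))
  | redN (a c : A) : Proof θ ((Formula.next (.nbr a c)).iffF (.nbr a c))
  | redB (a : A) :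
      Proof θ ((Formula.next (.beta a)).iffF ((Formula.beta a).orF (majorityF θ a)))
  | redU (φ ψ : Formula A) : Proof θ ((Formula.untl φ ψ).iffF (expU φ ψ))
  | a1 (φ ψ : Formula A) :
      Proof θ ((Formula.glob (φ.impF ψ)).impF ((Formula.glob φ).impF (Formula.glob ψ)))
  | a2 (φ : Formula A) : Proof θ ((Formula.neg (.next φ)).iffF (.next (.neg φ)))
  | a3 (φ ψ : Formula A) :
      Proof θ ((Formula.next (φ.impF ψ)).impF ((Formula.next φ).impF (.next ψ)))
  | a4 (φ : Formula A) :
      Proof θ ((Formula.glob (φ.impF (.next φ))).impF (φ.impF (Formula.glob φ)))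
  | a5 (φ ψ : Formula A) :
      Proof θ ((Formula.untl φ ψ).iffF (ψ.orF (.and φ (.next (.untl φ ψ)))))
  | a6 (φ ψ : Formula A) : Proof θ ((Formula.untl φ ψ).impF (Formula.ev ψ))
  | a7 (φ ψ₁ ψ₂ : Formula A) :
      Proof θ ((Formula.untl φ (ψ₁.orF ψ₂)).iffF ((Formula.untl φ ψ₁).orF (.untl φ ψ₂)))
  | a8 (φ ψ : Formula A) :
      Proof θ ((Formula.next (.and φ ψ)).iffF (.and (.next φ) (.next ψ)))
  | mp {φ ψ : Formula A} : Proof θ (φ.impF ψ) → Proof θ φ → Proof θ ψ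
  | necG {φ : Formula A} : Proof θ φ → Proof θ (Formula.glob φ)
  | necX {φ : Formula A} : Proof θ φ → Proof θ (.next φ)

/-- Substitution `[φ/ψ]χ` of `φ` for occurrences of the subformula `ψ` in `χ`. -/
def subst (φ ψ : Formula A) : Formula A → Formula A
  | .neg χ₁ => if Formula.neg χ₁ = ψ then φ else .neg (subst φ ψ χ₁)
  | .and χ₁ χ₂ => if Formula.and χ₁ χ₂ = ψ then φ else .and (subst φ ψ χ₁) (subst φ ψ χ₂)
  | .next χ₁ => if Formula.next χ₁ = ψ then φ else .next (subst φ ψ χ₁)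
  | .untl χ₁ χ₂ => if Formula.untl χ₁ χ₂ = ψ then φ else .untl (subst φ ψ χ₁) (subst φ ψ χ₂)
  | χ => if χ = ψ then φ else χ

/-- The until translation `t_u`; on until formulas
`t_u(φUψ) = t_u(EXP_U(φUψ)) = EXP_U(t_u(φ) U t_u(ψ))` (since `t_u` commutes with
`¬`, `∧` and `X`). -/
def tu : Formula A → Formula A
  | .top => .top
  | .nbr a c => .nbr a c
  | .beta a => .beta a
  | .neg φ => .neg (tu φ)
  | .and φ ψ => .and (tu φ) (tu ψ)
  | .next φ => .next (tu φ)
  | .untl φ ψ => expU (tu φ) (tu ψ)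

/-- A formula contains no occurrence of the until operator. -/
def untilFree : Formula A → Prop
  | .top => True
  | .nbr _ _ => True
  | .beta _ => True
  | .neg φ => untilFree φ
  | .and φ ψ => untilFree φ ∧ untilFree ψ
  | .next φ => untilFree φ
  | .untl _ _ => False

/-- A formula is propositional: no occurrence of `X` nor of `U`. -/
def propositional : Formula A → Prop
  | .top => True
  | .nbr _ _ => True
  | .beta _ => True
  | .neg φ => propositional φ
  | .and φ ψ => propositional φ ∧ propositional ψ
  | .next _ => False
  | .untl _ _ => False

/-- The cost measure `c` (on until-free formulas). -/
def cost : Formula A → ℕ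
  | .top => 1
  | .nbr _ _ => 1
  | .beta _ => 1
  | .neg φ => 1 + cost φ
  | .and φ ψ => 1 + max (cost φ) (cost ψ)
  | .next (.beta _) => 4 + 2 * Fintype.card A ^ 2
  | .next φ => 2 * cost φ
  | .untl φ ψ => 1 + max (cost φ) (cost ψ)

/-- The subformula relation. -/
inductive Subf : Formula A → Formula A → Prop
  | refl (φ : Formula A) : Subf φ φ
  | neg {ψ φ : Formula A} : Subf ψ φ → Subf ψ (.neg φ)
  | andL {ψ φ₁ φ₂ : Formula A} : Subf ψ φ₁ → Subf ψ (.and φ₁ φ₂)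
  | andR {ψ φ₁ φ₂ : Formula A} : Subf ψ φ₂ → Subf ψ (.and φ₁ φ₂)
  | next {ψ φ : Formula A} : Subf ψ φ → Subf ψ (.next φ)
  | untlL {ψ φ₁ φ₂ : Formula A} : Subf ψ φ₁ → Subf ψ (.untl φ₁ φ₂)
  | untlR {ψ φ₁ φ₂ : Formula A} : Subf ψ φ₂ → Subf ψ (.untl φ₁ φ₂)

/-- `pushX θ φ` computes `t(Xφ)` for a propositional (`X`- and `U`-free) formula
`φ`: it replaces each `β_a` by `β_a ∨ β_{N(a)>θ}` and keeps `N_{ac}` unchanged,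
following the reduction equations `t(XN_{ac}) = N_{ac}`, `t(Xβ_a) = t(β_a ∨ β_{N(a)>θ})`,
`t(X(φ∧ψ)) = t(Xφ ∧ Xψ)`, `t(X¬φ) = t(¬Xφ)`. -/
noncomputable def pushX (θ : ℝ) : Formula A → Formula A
  | .top => .top
  | .nbr a c => .nbr a c
  | .beta a => (Formula.beta a).orF (majorityF θ a)
  | .neg φ => .neg (pushX θ φ)
  | .and φ ψ => .and (pushX θ φ) (pushX θ ψ)
  | .next φ => .next (pushX θ φ)
  | .untl φ ψ => .untl (pushX θ φ) (pushX θ ψ)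

/-- The translation `t` of until-free formulas into propositional formulas, given
by `t(N_{ac}) = N_{ac}`, `t(β_a) = β_a`, `t(φ∧ψ) = t(φ)∧t(ψ)`, `t(¬φ) = ¬t(φ)`,
`t(XN_{ac}) = N_{ac}`, `t(Xβ_a) = t(β_a ∨ β_{N(a)>θ})`, `t(X(φ∧ψ)) = t(Xφ ∧ Xψ)`,
`t(X¬φ) = t(¬Xφ)` and `t(XXφ) = t(X t(Xφ))`; all `X` cases are computed by
pushing `X` through the already translated (hence propositional) body. -/
noncomputable def tr (θ : ℝ) : Formula A → Formula A
  | .top => .top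
  | .nbr a c => .nbr a c
  | .beta a => .beta a
  | .neg φ => .neg (tr θ φ)
  | .and φ ψ => .and (tr θ φ) (tr θ ψ)
  | .next φ => pushX θ (tr θ φ)
  | .untl φ ψ => .untl (tr θ φ) (tr θ ψ)

/-!
Both sides unfold to the update rule. The disjunct of `β_{N(a)>θ}` indexed by `(G, 𝒩)` holds
exactly when `𝒩 = N(a)` and `G ⊆ b_i`, and the best such witness is `G = N(a) ∩ b_i`, so
`β_{N(a)>θ}` holds iff `|N(a) ∩ b_i| / |N(a)| > θ`.
-/

section Finset

variable {α : Type*} [DecidableEq α]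

theorem exists_subset_inter_lt_card_div_iff (s t : Finset α) (θ : ℝ) :
    (∃ G ⊆ s, G ⊆ t ∧ θ < (G.card : ℝ) / s.card) ↔ θ < ((s ∩ t).card : ℝ) / s.card := by
  constructor
  · rintro ⟨G, hGs, hGt, hθ⟩
    have hG : G ⊆ s ∩ t := Finset.subset_inter hGs hGt
    exact hθ.trans_le (by gcongr)
  · intro h
    exact ⟨s ∩ t, Finset.inter_subset_left, Finset.inter_subset_right, h⟩

end Finset

section Semantics

variable (M : SNModel A) (i : ℕ)

theorem sat_orF (φ ψ : Formula A) : Sat M i (φ.orF ψ) ↔ Sat M i φ ∨ Sat M i ψ := by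
  simp only [Formula.orF, Sat]
  tauto

theorem sat_bigOr (l : List (Formula A)) : Sat M i (bigOr l) ↔ ∃ φ ∈ l, Sat M i φ := by
  induction l with
  | nil => simp [bigOr, Sat]
  | cons φ l ih => simp [bigOr, sat_orF, ih]

theorem sat_bigAnd (l : List (Formula A)) : Sat M i (bigAnd l) ↔ ∀ φ ∈ l, Sat M i φ := by
  induction l with
  | nil => simp [bigAnd, Sat]
  | cons φ l ih => simp [bigAnd, Sat, ih]

theorem mem_path_succ (a : A) :
    a ∈ M.path (i + 1) ↔
      a ∈ M.path i ∨ M.θ < ((M.N a ∩ M.path i).card : ℝ) / (M.N a).card := by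
  simp [SNModel.path, SNModel.upd]

theorem sat_majorityF_disjunct (a : A) (G 𝒩 : Finset A) :
    Sat M i (Formula.and (bigAnd (𝒩.toList.map (fun c => Formula.nbr a c)))
        (Formula.and
          (bigAnd (((Finset.univ : Finset A) \ 𝒩).toList.map
            (fun c => Formula.neg (Formula.nbr a c))))
          (bigAnd (G.toList.map (fun c => Formula.beta c))))) ↔
      𝒩 = M.N a ∧ G ⊆ M.path i := by
  simp only [Sat, sat_bigAnd, List.forall_mem_map, Finset.mem_toList, Finset.mem_sdiff,
    Finset.mem_univ, true_and]
  constructor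
  · rintro ⟨hsub, hsup, hG⟩
    refine ⟨Finset.ext fun c => ⟨fun hc => hsub c hc, fun hc => ?_⟩, fun c hc => hG c hc⟩
    by_contra hc'
    exact hsup c hc' hc
  · rintro ⟨rfl, hG⟩
    exact ⟨fun c hc => hc, fun c hc => hc, fun c hc => hG hc⟩

theorem sat_majorityF_iff_exists (θ : ℝ) (a : A) :
    Sat M i (majorityF θ a) ↔
      ∃ G ⊆ M.N a, G ⊆ M.path i ∧ θ < (G.card : ℝ) / (M.N a).card := by
  rw [majorityF, sat_bigOr]
  simp only [List.mem_map, Finset.mem_toList, Finset.mem_filter, Finset.mem_univ, true_and]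
  constructor
  · rintro ⟨_, ⟨⟨G, 𝒩⟩, ⟨hG𝒩, hθ⟩, rfl⟩, hsat⟩
    obtain ⟨rfl, hG⟩ := (sat_majorityF_disjunct M i a G 𝒩).1 hsat
    exact ⟨G, hG𝒩, hG, hθ⟩
  · rintro ⟨G, hGN, hG, hθ⟩
    exact ⟨_, ⟨(G, M.N a), ⟨hGN, hθ⟩, rfl⟩, (sat_majorityF_disjunct M i a G _).2 ⟨rfl, hG⟩⟩

theorem sat_majorityF (θ : ℝ) (a : A) :
    Sat M i (majorityF θ a) ↔ θ < ((M.N a ∩ M.path i).card : ℝ) / (M.N a).card := by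
  rw [sat_majorityF_iff_exists, exists_subset_inter_lt_card_div_iff]

end Semantics

/-- validity of the reduction axiom `X β_a ↔ β_a ∨ β_{N(a)>θ}`. -/
theorem redB_valid (M : SNModel A) (a : A) (i : ℕ) :
    Sat M i (Formula.next (Formula.beta a)) ↔
      Sat M i ((Formula.beta a).orF (majorityF M.θ a)) := by
  rw [sat_orF, sat_majorityF]
  exact mem_path_succ M i a
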